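/- arXiv:1710.11070 — 5 statements merged into one kernel-verified Lean document; each statement's English description precedes it below -/
import Mathlib

section
/- (Lemma 7: uniform convergence of the empirical KL divergence.) Fix K ≥ 2, m ≥ 2, c_0 > 0 and θ ∈ Θ_{c_0}. For θ′ ∈ Θ_{c_0} let KL(θ′) = Σ_{x∈[V]^m} p_{θ,m}(x) log( p_{θ,m}(x)/p_{θ′,m}(x) ) and, for X_1,…,X_n i.i.d. with law p_{θ,m}, let KL̂_n(θ′) = (1/n) Σ_{i=1}^n log( p_{θ,m}(X_i)/p_{θ′,m}(X_i) ). Then there exists a constant C > 0 depending only on θ, c_0, m, V, K and ν_0 such that for every n ≥ 1, E[ sup over θ′ ∈ Θ_{c_0} with KL(θ′) > 0 of |KL̂_n(θ′) − KL(θ′)| / sqrt(KL(θ′)) ] ≤ C/√n. -/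
open MeasureTheory Filter

noncomputable section

namespace TopicModel

/-- The probability simplex in `ℝ^K`. -/
def simplex (K : ℕ) : Set (Fin K → ℝ) := {h | (∀ k, 0 ≤ h k) ∧ ∑ k, h k = 1}

/-- The parameter set `Θ_{c₀}`: `K` topic vectors, each a probability vector on `[V]`
with all entries at least `c₀`. -/
def Theta (c0 : ℝ) (V K : ℕ) : Set (Fin K → Fin V → ℝ) :=
  {θ | (∀ k ℓ, c0 ≤ θ k ℓ) ∧ ∀ k, ∑ ℓ, θ k ℓ = 1}

/-- `θ` is a tuple of probability vectors. -/
def IsParam {V K : ℕ} (θ : Fin K → Fin V → ℝ) : Prop :=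
  (∀ k ℓ, 0 ≤ θ k ℓ) ∧ ∀ k, ∑ ℓ, θ k ℓ = 1

/-- Word probability `p_{θ,h}(v) = Σ_k h_k θ_k(v)`. -/
def pWord {V K : ℕ} (θ : Fin K → Fin V → ℝ) (h : Fin K → ℝ) (v : Fin V) : ℝ :=
  ∑ k, h k * θ k v

/-- Document probability given mixing vector `h`: `p_{θ,h}(x) = Π_i p_{θ,h}(x_i)`. -/
def pDoc {V K : ℕ} (m : ℕ) (θ : Fin K → Fin V → ℝ) (h : Fin K → ℝ)
    (x : Fin m → Fin V) : ℝ :=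
  ∏ i, pWord θ h (x i)

/-- Marginal document probability `p_{θ,m}(x) = ∫ p_{θ,h}(x) dν₀(h)`. -/
def pM {V K : ℕ} (ν0 : Measure (Fin K → ℝ)) (m : ℕ) (θ : Fin K → Fin V → ℝ)
    (x : Fin m → Fin V) : ℝ :=
  ∫ h, pDoc m θ h x ∂ν0

/-- `ℓ¹`-norm of a `K × V` array: `‖δ‖₁ = Σ_k Σ_ℓ |δ_k(ℓ)|`. -/
def norm1 {V K : ℕ} (δ : Fin K → Fin V → ℝ) : ℝ := ∑ k, ∑ ℓ, |δ k ℓ|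

/-- Wasserstein distance between parameters:
`d_W(θ,θ') = min_π Σ_k ‖θ_k − θ'_{π(k)}‖₁`. -/
def dW {V K : ℕ} (θ θ' : Fin K → Fin V → ℝ) : ℝ :=
  ⨅ π : Equiv.Perm (Fin K), ∑ k, ∑ ℓ, |θ k ℓ - θ' (π k) ℓ|

/-- `L¹` distance between the document pmfs of two parameters. -/
def distL1 {V K : ℕ} (ν0 : Measure (Fin K → ℝ)) (m : ℕ)
    (θ θ' : Fin K → Fin V → ℝ) : ℝ :=
  ∑ x : Fin m → Fin V, |pM ν0 m θ x - pM ν0 m θ' x|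

/-- The `p`-th order degeneracy criterion `𝔡_{m,p}(θ)`: the infimum over all
`δ` with `‖δ‖₁ = 1` and `Σ_ℓ δ_k(ℓ) = 0` for every `k`, of
`Σ_{x ∈ [V]^m} |∫ p_{θ,h}(x) Σ_{i₁<⋯<i_p} Π_t (δ_h(x_{i_t}) / p_{θ,h}(x_{i_t})) dν₀|`. -/
def degen {V K : ℕ} (ν0 : Measure (Fin K → ℝ)) (m : ℕ) (θ : Fin K → Fin V → ℝ)
    (p : ℕ) : ℝ :=
  sInf {r : ℝ | ∃ δ : Fin K → Fin V → ℝ, norm1 δ = 1 ∧ (∀ k, ∑ ℓ, δ k ℓ = 0) ∧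
    r = ∑ x : Fin m → Fin V,
      |∫ h, pDoc m θ h x *
        ∑ S ∈ Finset.powersetCard p (Finset.univ : Finset (Fin m)),
          ∏ i ∈ S, ((∑ k, h k * δ k (x i)) / pWord θ h (x i)) ∂ν0|}

/-- The order of degeneracy `𝔭(m;θ) ∈ ℕ ∪ {∞}`:
the least `p ∈ {1,…,m}` with `𝔡_{m,p}(θ) > 0`, or `∞` if none exists. -/
def pOrder {V K : ℕ} (ν0 : Measure (Fin K → ℝ)) (m : ℕ) (θ : Fin K → Fin V → ℝ) : ℕ∞ :=
  sInf ((↑) '' {p : ℕ | 1 ≤ p ∧ p ≤ m ∧ 0 < degen ν0 m θ p})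

/-- Assumption (A2) on the mixing measure `ν₀`: a Borel probability measure supported on the
simplex, exchangeable, with `E[h₁²] > E[h₁h₂]` and (when `K ≥ 3`)
`E[h₁³] + 2E[h₁h₂h₃] > 3E[h₁²h₂]`. -/
structure NiceMixing (K : ℕ) (ν0 : Measure (Fin K → ℝ)) : Prop where
  prob : IsProbabilityMeasure ν0
  support : ν0 (simplex K)ᶜ = 0
  exch : ∀ π : Equiv.Perm (Fin K), Measure.map (fun h => h ∘ π) ν0 = ν0
  mom2 : ∀ i j : Fin K, i ≠ j → ∫ h, h i * h j ∂ν0 < ∫ h, h i ^ 2 ∂ν0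
  mom3 : ∀ i j k : Fin K, i ≠ j → j ≠ k → i ≠ k →
    3 * ∫ h, h i ^ 2 * h j ∂ν0 < ∫ h, h i ^ 3 ∂ν0 + 2 * ∫ h, h i * h j * h k ∂ν0

/-- The equivalence class `Θ̃_{c₀}(θ)` of parameters inducing the same document pmf as `θ`. -/
def equivClass {V K : ℕ} (ν0 : Measure (Fin K → ℝ)) (m : ℕ) (c0 : ℝ)
    (θ : Fin K → Fin V → ℝ) : Set (Fin K → Fin V → ℝ) :=
  {θ' | θ' ∈ Theta c0 V K ∧ ∀ x : Fin m → Fin V, pM ν0 m θ' x = pM ν0 m θ x}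

/-- Probability of the event `A` under `n` i.i.d. draws from the pmf `p` on a finite set. -/
def prodProb {α : Type*} [Fintype α] (p : α → ℝ) (n : ℕ) (A : Set (Fin n → α)) : ℝ :=
  ∑ xs : Fin n → α, A.indicator (fun ys => ∏ i, p (ys i)) xs

end TopicModel

namespace TopicModel

/-- KL divergence between the document pmfs of two parameters. -/
def klD {V K : ℕ} (ν0 : Measure (Fin K → ℝ)) (m : ℕ) (θ θ' : Fin K → Fin V → ℝ) : ℝ :=
  ∑ x : Fin m → Fin V, pM ν0 m θ x * Real.log (pM ν0 m θ x / pM ν0 m θ' x)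

/-!
Write `p = p_{θ,m}`, `q = p_{θ',m}` and `P̂ₙ` for the empirical distribution of the sample. Then
`KL̂ₙ(θ') - KL(θ') = ∑ₓ (P̂ₙ(x) - p(x)) log (p(x) / q(x))`, which Cauchy–Schwarz bounds by
`‖P̂ₙ - p‖₂ ‖log p - log q‖₂`. As `p, q ≥ c₀^m`, the logarithm is `c₀^{-m}`-Lipschitz on their
values, and `‖p - q‖₂² ≤ 2 KL(θ')` because each atom satisfies
`(p - q)² / 2 ≤ p log (p / q) - (p - q)` when `p, q ≤ 1`. Hence
`|KL̂ₙ(θ') - KL(θ')| / √KL(θ') ≤ √2 c₀^{-m} ‖P̂ₙ - p‖₂` uniformly in `θ'`, while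
`E ‖P̂ₙ - p‖₂ ≤ (E ‖P̂ₙ - p‖₂²)^{1/2} ≤ n^{-1/2}`.
-/

open Real Finset

lemma two_mul_log_le_sub_inv {t : ℝ} (ht : 1 ≤ t) : 2 * log t ≤ t - t⁻¹ := by
  have := Real.self_le_sinh_iff.2 (log_nonneg ht)
  rw [sinh_log (by linarith)] at this
  linarith

lemma log_one_sub_le {s : ℝ} (hs0 : 0 ≤ s) (hs1 : s < 1) : log (1 - s) ≤ -s - s ^ 2 / 2 := by
  have := sum_le_hasSum (range 2) (fun i _ => by positivity)
    (hasSum_pow_div_log_of_abs_lt_one (by rwa [abs_of_nonneg hs0]))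
  norm_num [sum_range_succ] at this
  linarith

lemma sq_sub_div_two_le_mul_log_div_sub {p q : ℝ} (hp0 : 0 < p) (hp1 : p ≤ 1) (hq0 : 0 < q)
    (hq1 : q ≤ 1) : (p - q) ^ 2 / 2 ≤ p * log (p / q) - (p - q) := by
  rcases le_or_gt p q with hpq | hqp
  · have hlog := two_mul_log_le_sub_inv ((one_le_div hp0).2 hpq)
    have hq2 : (p - q) ^ 2 / 2 ≤ (p - q) ^ 2 / (2 * q) :=
      div_le_div_of_nonneg_left (sq_nonneg _) (by positivity) (by linarith)
    have hsq : (p - q) ^ 2 / (2 * q) = (p * (p / q) - p * (p / q)⁻¹) / 2 - (p - q) := by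
      field_simp; ring
    have hmul := mul_le_mul_of_nonneg_left hlog hp0.le
    rw [← inv_div p q, inv_inv, log_inv] at hmul
    linarith
  · have hlog := log_one_sub_le (s := (p - q) / p) (by positivity)
      ((div_lt_one hp0).2 (by linarith))
    have hp2 : (p - q) ^ 2 / 2 ≤ (p - q) ^ 2 / (2 * p) :=
      div_le_div_of_nonneg_left (sq_nonneg _) (by positivity) (by linarith)
    have hsq : (p - q) ^ 2 / (2 * p) = p * ((p - q) / p) ^ 2 / 2 := by field_simp
    have h1s : 1 - (p - q) / p = (p / q)⁻¹ := by field_simp; ring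
    have hmul := mul_le_mul_of_nonneg_left hlog hp0.le
    rw [h1s, log_inv] at hmul
    have : p * ((p - q) / p) = p - q := by field_simp
    linarith

lemma log_sub_log_le_abs_sub_div {a b c : ℝ} (hc : 0 < c) (ha : c ≤ a) (hb : c ≤ b) :
    log a - log b ≤ |a - b| / c := by
  have hb0 : 0 < b := hc.trans_le hb
  calc log a - log b = log (a / b) := (log_div (hc.trans_le ha).ne' hb0.ne').symm
    _ ≤ a / b - 1 := log_le_sub_one_of_pos (div_pos (hc.trans_le ha) hb0)
    _ = (a - b) / b := by field_simp
    _ ≤ |a - b| / b := by gcongr; exact le_abs_self _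
    _ ≤ |a - b| / c := by gcongr

lemma abs_log_sub_log_le {a b c : ℝ} (hc : 0 < c) (ha : c ≤ a) (hb : c ≤ b) :
    |log a - log b| ≤ |a - b| / c :=
  abs_sub_le_iff.2 ⟨log_sub_log_le_abs_sub_div hc ha hb,
    abs_sub_comm a b ▸ log_sub_log_le_abs_sub_div hc hb ha⟩

section FiniteDistribution

variable {α : Type*} [Fintype α] {p q : α → ℝ} {c : ℝ}

lemma sum_sq_sub_le_two_mul_kl (hp0 : ∀ x, 0 < p x) (hq0 : ∀ x, 0 < q x)
    (hp1 : ∑ x, p x = 1) (hq1 : ∑ x, q x = 1) :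
    ∑ x, (p x - q x) ^ 2 ≤ 2 * ∑ x, p x * log (p x / q x) := by
  have hle : ∀ {r : α → ℝ}, (∀ x, 0 < r x) → ∑ x, r x = 1 → ∀ x, r x ≤ 1 := fun hr0 hr1 x =>
    hr1 ▸ single_le_sum (fun y _ => (hr0 y).le) (mem_univ x)
  have hterm := sum_le_sum fun x (_ : x ∈ univ) =>
    sq_sub_div_two_le_mul_log_div_sub (hp0 x) (hle hp0 hp1 x) (hq0 x) (hle hq0 hq1 x)
  rw [← sum_div, sum_sub_distrib, sum_sub_distrib, hp1, hq1, sub_self, sub_zero] at hterm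
  linarith

lemma sum_sq_log_sub_log_le (hc : 0 < c) (hp : ∀ x, c ≤ p x) (hq : ∀ x, c ≤ q x)
    (hp1 : ∑ x, p x = 1) (hq1 : ∑ x, q x = 1) :
    ∑ x, (log (p x) - log (q x)) ^ 2 ≤ 2 / c ^ 2 * ∑ x, p x * log (p x / q x) := by
  calc ∑ x, (log (p x) - log (q x)) ^ 2 ≤ ∑ x, (p x - q x) ^ 2 / c ^ 2 := by
        gcongr with x
        rw [← sq_abs, ← sq_abs (p x - q x), ← div_pow]
        exact pow_le_pow_left₀ (abs_nonneg _) (abs_log_sub_log_le hc (hp x) (hq x)) 2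
    _ ≤ 2 / c ^ 2 * ∑ x, p x * log (p x / q x) := by
        rw [← sum_div, div_mul_eq_mul_div]
        gcongr
        exact sum_sq_sub_le_two_mul_kl (fun x => hc.trans_le (hp x)) (fun x => hc.trans_le (hq x))
          hp1 hq1

lemma abs_sum_sub_mul_log_div_le (hc : 0 < c) (hp : ∀ x, c ≤ p x) (hq : ∀ x, c ≤ q x)
    (hp1 : ∑ x, p x = 1) (hq1 : ∑ x, q x = 1) (r : α → ℝ) :
    |∑ x, (r x - p x) * log (p x / q x)| ≤
      √2 / c * √(∑ x, (r x - p x) ^ 2) * √(∑ x, p x * log (p x / q x)) := by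
  have hlog : ∀ x, log (p x / q x) = log (p x) - log (q x) := fun x =>
    log_div (hc.trans_le (hp x)).ne' (hc.trans_le (hq x)).ne'
  simp_rw [hlog]
  calc |∑ x, (r x - p x) * (log (p x) - log (q x))|
      ≤ √(∑ x, (r x - p x) ^ 2) * √(∑ x, (log (p x) - log (q x)) ^ 2) := by
        rw [← sqrt_mul (sum_nonneg fun x _ => sq_nonneg _)]
        exact abs_le_sqrt (sum_mul_sq_le_sq_mul_sq _ _ _)
    _ ≤ √(∑ x, (r x - p x) ^ 2) * √(2 / c ^ 2 * ∑ x, p x * (log (p x) - log (q x))) := by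
        gcongr
        simpa only [hlog] using sum_sq_log_sub_log_le hc hp hq hp1 hq1
    _ = √2 / c * √(∑ x, (r x - p x) ^ 2) * √(∑ x, p x * (log (p x) - log (q x))) := by
        rw [sqrt_mul (by positivity), sqrt_div' _ (sq_nonneg c), sqrt_sq hc.le]
        ring

end FiniteDistribution

section Iid

variable {α : Type*} [Fintype α] {p : α → ℝ} {n : ℕ}

def iidExpect (p : α → ℝ) (n : ℕ) (F : (Fin n → α) → ℝ) : ℝ :=
  ∑ xs : Fin n → α, (∏ i, p (xs i)) * F xs

def empiricalPMF [DecidableEq α] (xs : Fin n → α) (x : α) : ℝ :=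
  (n : ℝ)⁻¹ * ∑ i, if xs i = x then 1 else 0

lemma sum_empiricalPMF_mul [DecidableEq α] (xs : Fin n → α) (f : α → ℝ) :
    ∑ x, empiricalPMF xs x * f x = (n : ℝ)⁻¹ * ∑ i, f (xs i) := by
  simp only [empiricalPMF, mul_assoc, ← mul_sum, sum_mul, ite_mul, one_mul, zero_mul]
  rw [sum_comm]
  simp

lemma iidExpect_mono (hp0 : ∀ x, 0 ≤ p x) {F G : (Fin n → α) → ℝ} (hFG : ∀ xs, F xs ≤ G xs) :
    iidExpect p n F ≤ iidExpect p n G :=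
  sum_le_sum fun xs _ => mul_le_mul_of_nonneg_left (hFG xs) (prod_nonneg fun _ _ => hp0 _)

lemma iidExpect_const_mul (c : ℝ) (F : (Fin n → α) → ℝ) :
    iidExpect p n (fun xs => c * F xs) = c * iidExpect p n F := by
  simp only [iidExpect, mul_sum]
  exact sum_congr rfl fun xs _ => by ring

lemma iidExpect_sum {ι : Type*} (s : Finset ι) (F : ι → (Fin n → α) → ℝ) :
    iidExpect p n (fun xs => ∑ j ∈ s, F j xs) = ∑ j ∈ s, iidExpect p n (F j) := by
  simp only [iidExpect, mul_sum]
  exact sum_comm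

lemma iidExpect_prod (f : Fin n → α → ℝ) :
    iidExpect p n (fun xs => ∏ i, f i (xs i)) = ∏ i, ∑ x, p x * f i x := by
  simp only [iidExpect, ← prod_mul_distrib]
  exact (Fintype.prod_sum fun i x => p x * f i x).symm

lemma sum_prod_eq_one (hp1 : ∑ x, p x = 1) : ∑ xs : Fin n → α, ∏ i, p (xs i) = 1 := by
  simpa [iidExpect, hp1] using iidExpect_prod (p := p) (n := n) fun _ _ => 1

lemma iidExpect_mul_apply (hp1 : ∑ x, p x = 1) {g : α → ℝ} (hg : ∑ x, p x * g x = 0)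
    (i j : Fin n) :
    iidExpect p n (fun xs => g (xs i) * g (xs j)) = if i = j then ∑ x, p x * g x ^ 2 else 0 := by
  have hfactor : ∀ xs : Fin n → α, g (xs i) * g (xs j) =
      ∏ k, (if k = i then g (xs k) else 1) * (if k = j then g (xs k) else 1) := by
    intro xs
    rw [prod_mul_distrib, prod_ite_eq' univ i, prod_ite_eq' univ j]
    simp
  rw [funext hfactor,
    iidExpect_prod fun k x => (if k = i then g x else 1) * (if k = j then g x else 1)]
  split_ifs with hij
  · subst hij
    rw [prod_eq_single_of_mem i (mem_univ i) fun k _ hk => by simp [hk, hp1]]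
    simp [sq]
  · exact prod_eq_zero (mem_univ i) (by simpa [hij] using hg)

lemma iidExpect_sq_sum (hp1 : ∑ x, p x = 1) {g : α → ℝ} (hg : ∑ x, p x * g x = 0) :
    iidExpect p n (fun xs => (∑ i, g (xs i)) ^ 2) = n * ∑ x, p x * g x ^ 2 := by
  simp_rw [sq, sum_mul_sum, iidExpect_sum, iidExpect_mul_apply hp1 hg]
  simp [sq]

lemma iidExpect_sum_sq_empiricalPMF_sub_le [DecidableEq α] (hp0 : ∀ x, 0 ≤ p x)
    (hp1 : ∑ x, p x = 1) (hn : 0 < n) :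
    iidExpect p n (fun xs => ∑ x, (empiricalPMF xs x - p x) ^ 2) ≤ (n : ℝ)⁻¹ := by
  have hn0 : (n : ℝ) ≠ 0 := by positivity
  have hcentered : ∀ x, ∑ y, p y * ((if y = x then 1 else 0) - p x) = 0 := by
    intro x; simp [mul_sub, ← sum_mul, hp1]
  have hvar : ∀ x, ∑ y, p y * ((if y = x then 1 else 0) - p x) ^ 2 = p x * (1 - p x) := by
    intro x
    simp only [sub_sq, ite_pow, one_pow, zero_pow two_ne_zero, mul_ite, mul_one, mul_zero, ite_mul,
      zero_mul, mul_add, mul_sub, sum_add_distrib, sum_sub_distrib, sum_ite_eq', mem_univ,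
      if_true, ← sum_mul, hp1, one_mul]
    ring
  have hdev : ∀ (xs : Fin n → α) x, (empiricalPMF xs x - p x) ^ 2 =
      (n : ℝ)⁻¹ ^ 2 * (∑ i, ((if xs i = x then 1 else 0) - p x)) ^ 2 := by
    intro xs x
    simp only [empiricalPMF, sum_sub_distrib, sum_const, card_univ, Fintype.card_fin, nsmul_eq_mul]
    field_simp
  simp_rw [hdev, iidExpect_sum, iidExpect_const_mul, iidExpect_sq_sum hp1 (hcentered _), hvar]
  calc ∑ x, (n : ℝ)⁻¹ ^ 2 * (n * (p x * (1 - p x))) = (n : ℝ)⁻¹ * ∑ x, p x * (1 - p x) := by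
        rw [mul_sum]; exact sum_congr rfl fun x _ => by field_simp
    _ ≤ (n : ℝ)⁻¹ * ∑ x, p x := by
        gcongr with x; exact mul_le_of_le_one_right (hp0 x) (by linarith [hp0 x])
    _ = (n : ℝ)⁻¹ := by rw [hp1, mul_one]

lemma iidExpect_sqrt_le (hp0 : ∀ x, 0 ≤ p x) (hp1 : ∑ x, p x = 1)
    {F : (Fin n → α) → ℝ} (hF : ∀ xs, 0 ≤ F xs) :
    iidExpect p n (fun xs => √(F xs)) ≤ √(iidExpect p n F) :=
  strictConcaveOn_sqrt.concaveOn.le_map_sum (fun _ _ => prod_nonneg fun _ _ => hp0 _)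
    (sum_prod_eq_one hp1) fun xs _ => hF xs

end Iid

section DocumentProbabilities

variable {V K m : ℕ} {c0 : ℝ} {ν0 : Measure (Fin K → ℝ)} {θ : Fin K → Fin V → ℝ}
  {h : Fin K → ℝ}

lemma isParam_of_mem_Theta (hc0 : 0 ≤ c0) (hθ : θ ∈ Theta c0 V K) : IsParam θ :=
  ⟨fun k ℓ => hc0.trans (hθ.1 k ℓ), hθ.2⟩

lemma pWord_nonneg (hθ : IsParam θ) (hh : h ∈ simplex K) (v : Fin V) : 0 ≤ pWord θ h v :=
  sum_nonneg fun k _ => mul_nonneg (hh.1 k) (hθ.1 k v)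

lemma sum_pWord (hθ : IsParam θ) (hh : h ∈ simplex K) : ∑ v, pWord θ h v = 1 := by
  simp only [pWord]
  rw [sum_comm]
  simp [← mul_sum, hθ.2, hh.2]

lemma le_pWord (hθ : θ ∈ Theta c0 V K) (hh : h ∈ simplex K) (v : Fin V) : c0 ≤ pWord θ h v :=
  calc c0 = ∑ k, h k * c0 := by rw [← sum_mul, hh.2, one_mul]
    _ ≤ pWord θ h v := sum_le_sum fun k _ => mul_le_mul_of_nonneg_left (hθ.1 k v) (hh.1 k)

lemma pDoc_le_one (hθ : IsParam θ) (hh : h ∈ simplex K) (x : Fin m → Fin V) :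
    pDoc m θ h x ≤ 1 :=
  prod_le_one (fun i _ => pWord_nonneg hθ hh (x i)) fun i _ =>
    sum_pWord hθ hh ▸ single_le_sum (fun v _ => pWord_nonneg hθ hh v) (mem_univ (x i))

lemma pow_le_pDoc (hc0 : 0 ≤ c0) (hθ : θ ∈ Theta c0 V K) (hh : h ∈ simplex K)
    (x : Fin m → Fin V) : c0 ^ m ≤ pDoc m θ h x := by
  simpa [pDoc] using prod_le_prod (fun _ _ => hc0) fun i (_ : i ∈ univ) => le_pWord hθ hh (x i)

lemma sum_pDoc (hθ : IsParam θ) (hh : h ∈ simplex K) : ∑ x : Fin m → Fin V, pDoc m θ h x = 1 := by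
  simp only [pDoc]
  rw [← Fintype.prod_sum]
  simp [sum_pWord hθ hh]

lemma continuous_pDoc (θ : Fin K → Fin V → ℝ) (x : Fin m → Fin V) :
    Continuous fun h => pDoc m θ h x := by
  unfold pDoc pWord
  fun_prop

variable [IsProbabilityMeasure ν0]

lemma integrable_pDoc (hsupp : ν0 (simplex K)ᶜ = 0) (hθ : IsParam θ) (x : Fin m → Fin V) :
    Integrable (fun h => pDoc m θ h x) ν0 := by
  refine (integrable_const (1 : ℝ)).mono' (continuous_pDoc θ x).aestronglyMeasurable ?_
  filter_upwards [ae_iff.2 hsupp] with h hh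
  rw [Real.norm_of_nonneg (r := pDoc m θ h x) (prod_nonneg fun i _ => pWord_nonneg hθ hh (x i))]
  exact pDoc_le_one hθ hh x

lemma pow_le_pM (hsupp : ν0 (simplex K)ᶜ = 0) (hc0 : 0 ≤ c0) (hθ : θ ∈ Theta c0 V K)
    (x : Fin m → Fin V) : c0 ^ m ≤ pM ν0 m θ x :=
  calc c0 ^ m = ∫ _, c0 ^ m ∂ν0 := by simp
    _ ≤ pM ν0 m θ x := integral_mono_ae (integrable_const _)
        (integrable_pDoc hsupp (isParam_of_mem_Theta hc0 hθ) x)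
        (by filter_upwards [ae_iff.2 hsupp] with h hh using pow_le_pDoc hc0 hθ hh x)

lemma sum_pM (hsupp : ν0 (simplex K)ᶜ = 0) (hθ : IsParam θ) :
    ∑ x : Fin m → Fin V, pM ν0 m θ x = 1 := by
  simp only [pM]
  rw [← integral_finsetSum _ fun x _ => integrable_pDoc hsupp hθ x]
  rw [integral_congr_ae (g := fun _ => 1)
    (by filter_upwards [ae_iff.2 hsupp] with h hh using sum_pDoc hθ hh)]
  simp

lemma abs_empiricalKL_sub_klD_le (hsupp : ν0 (simplex K)ᶜ = 0) (hc0 : 0 < c0)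
    (hθ : θ ∈ Theta c0 V K) {θ' : Fin K → Fin V → ℝ} (hθ' : θ' ∈ Theta c0 V K) {n : ℕ}
    (xs : Fin n → Fin m → Fin V) :
    |(1 / (n : ℝ)) * ∑ i, log (pM ν0 m θ (xs i) / pM ν0 m θ' (xs i)) - klD ν0 m θ θ'| ≤
      √2 / c0 ^ m * √(∑ x, (empiricalPMF xs x - pM ν0 m θ x) ^ 2) * √(klD ν0 m θ θ') := by
  have hdev : (1 / (n : ℝ)) * ∑ i, log (pM ν0 m θ (xs i) / pM ν0 m θ' (xs i)) - klD ν0 m θ θ' =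
      ∑ x, (empiricalPMF xs x - pM ν0 m θ x) * log (pM ν0 m θ x / pM ν0 m θ' x) := by
    simp only [sub_mul, sum_sub_distrib, sum_empiricalPMF_mul, one_div, klD]
  rw [hdev]
  exact abs_sum_sub_mul_log_div_le (pow_pos hc0 m) (pow_le_pM hsupp hc0.le hθ)
    (pow_le_pM hsupp hc0.le hθ') (sum_pM hsupp (isParam_of_mem_Theta hc0.le hθ))
    (sum_pM hsupp (isParam_of_mem_Theta hc0.le hθ')) _

end DocumentProbabilities

theorem empirical_kl_uniform_convergence_general
    {V K m : ℕ} {c0 : ℝ} (hc0 : 0 < c0)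
    (ν0 : Measure (Fin K → ℝ)) (hprob : IsProbabilityMeasure ν0)
    (hsupp : ν0 (simplex K)ᶜ = 0)
    (θ : Fin K → Fin V → ℝ) (hθ : θ ∈ Theta c0 V K) :
    ∃ C > (0 : ℝ), ∀ n : ℕ, 1 ≤ n →
      (∑ xs : Fin n → (Fin m → Fin V),
        (∏ i, pM ν0 m θ (xs i)) *
          sSup {r : ℝ | ∃ θ' ∈ Theta c0 V K, 0 < klD ν0 m θ θ' ∧
            r = |(1 / (n : ℝ)) * ∑ i, Real.log (pM ν0 m θ (xs i) / pM ν0 m θ' (xs i))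
                  - klD ν0 m θ θ'| / Real.sqrt (klD ν0 m θ θ')})
        ≤ C / Real.sqrt n := by
  have hp0 : ∀ x, 0 ≤ pM ν0 m θ x := fun x =>
    (pow_nonneg hc0.le m).trans (pow_le_pM hsupp hc0.le hθ x)
  have hp1 := sum_pM hsupp (isParam_of_mem_Theta hc0.le hθ) (m := m)
  refine ⟨√2 / c0 ^ m, by positivity, fun n hn => ?_⟩
  have hratio : ∀ xs : Fin n → Fin m → Fin V, sSup {r : ℝ | ∃ θ' ∈ Theta c0 V K,
      0 < klD ν0 m θ θ' ∧ r = |(1 / (n : ℝ)) * ∑ i, log (pM ν0 m θ (xs i) / pM ν0 m θ' (xs i))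
        - klD ν0 m θ θ'| / √(klD ν0 m θ θ')} ≤
      √2 / c0 ^ m * √(∑ x, (empiricalPMF xs x - pM ν0 m θ x) ^ 2) := fun xs =>
    Real.sSup_le (fun _ ⟨θ', hθ', hkl, hr⟩ => hr ▸ (div_le_iff₀ (sqrt_pos.2 hkl)).2
      (abs_empiricalKL_sub_klD_le hsupp hc0 hθ hθ' xs)) (by positivity)
  calc _ ≤ iidExpect (pM ν0 m θ) n
          (fun xs => √2 / c0 ^ m * √(∑ x, (empiricalPMF xs x - pM ν0 m θ x) ^ 2)) :=
        iidExpect_mono hp0 hratio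
    _ ≤ √2 / c0 ^ m * √(n : ℝ)⁻¹ := by
        rw [iidExpect_const_mul]
        gcongr
        exact (iidExpect_sqrt_le hp0 hp1 fun xs => sum_nonneg fun x _ => sq_nonneg _).trans
          (sqrt_le_sqrt (iidExpect_sum_sq_empiricalPMF_sub_le hp0 hp1 hn))
    _ = √2 / c0 ^ m / √n := by rw [sqrt_inv, ← div_eq_mul_inv]

/-- **Lemma 7 (uniform convergence of the empirical KL divergence).**
There exists `C > 0` such that for every `n ≥ 1`, the expectation (under `n` i.i.d.
documents from `p_{θ,m}`) of the supremum over `θ' ∈ Θ_{c₀}` with `KL(θ') > 0` of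
`|KL̂_n(θ') − KL(θ')| / √KL(θ')` is at most `C/√n`. -/
theorem empirical_kl_uniform_convergence
    {V K m : ℕ} (hV : 2 ≤ V) (hK : 2 ≤ K) (hm : 2 ≤ m) {c0 : ℝ} (hc0 : 0 < c0)
    (ν0 : Measure (Fin K → ℝ)) (hprob : IsProbabilityMeasure ν0)
    (hsupp : ν0 (simplex K)ᶜ = 0)
    (θ : Fin K → Fin V → ℝ) (hθ : θ ∈ Theta c0 V K) :
    ∃ C > (0 : ℝ), ∀ n : ℕ, 1 ≤ n →
      (∑ xs : Fin n → (Fin m → Fin V),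
        (∏ i, pM ν0 m θ (xs i)) *
          sSup {r : ℝ | ∃ θ' ∈ Theta c0 V K, 0 < klD ν0 m θ θ' ∧
            r = |(1 / (n : ℝ)) * ∑ i, Real.log (pM ν0 m θ (xs i) / pM ν0 m θ' (xs i))
                  - klD ν0 m θ θ'| / Real.sqrt (klD ν0 m θ θ')})
        ≤ C / Real.sqrt n :=
  empirical_kl_uniform_convergence_general hc0 ν0 hprob hsupp θ hθ

end TopicModel
end
end

section
/- (Proposition: reverse Pinsker inequality on a finite domain, uniformly lower-bounded masses.) Let D be a finite nonempty set, c > 0, and let P, Q : D → ℝ be probability mass functions on D (nonnegative, summing to 1) with P(x) ≥ c and Q(x) ≥ c for every x ∈ D. Then KL(P‖Q) := Σ_{x∈D} P(x) log( P(x)/Q(x) ) ≤ ( 1/(2c²) + 1/c ) · ( Σ_{x∈D} |P(x) − Q(x)| )². -/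
open MeasureTheory Filter

noncomputable section

namespace TopicModel

/-- **Reverse Pinsker inequality on a finite domain with uniformly lower-bounded masses.**
If `P, Q` are pmfs on a finite nonempty set `D` with `P(x) ≥ c` and `Q(x) ≥ c` for all `x`,
then `KL(P‖Q) ≤ (1/(2c²) + 1/c)·(Σ_x |P(x) − Q(x)|)²`. -/
theorem reverse_pinsker
    {D : Type*} [Fintype D] [Nonempty D] (c : ℝ) (hc : 0 < c)
    (P Q : D → ℝ)
    (hP0 : ∀ x, 0 ≤ P x) (hP1 : ∑ x, P x = 1)
    (hQ0 : ∀ x, 0 ≤ Q x) (hQ1 : ∑ x, Q x = 1)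
    (hPc : ∀ x, c ≤ P x) (hQc : ∀ x, c ≤ Q x) :
    ∑ x, P x * Real.log (P x / Q x) ≤
      (1 / (2 * c ^ 2) + 1 / c) * (∑ x, |P x - Q x|) ^ 2 := by
  have hQpos : ∀ x, (0:ℝ) < Q x := fun x => lt_of_lt_of_le hc (hQc x)
  have hPpos : ∀ x, (0:ℝ) < P x := fun x => lt_of_lt_of_le hc (hPc x)
  set S := ∑ x, |P x - Q x| with hS
  have hSnn : 0 ≤ S := Finset.sum_nonneg fun x _ => abs_nonneg _
  have step1 : ∑ x, P x * Real.log (P x / Q x) ≤ ∑ x, (P x - Q x)^2 / Q x := by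
    have key : ∑ x, (P x - Q x)^2 / Q x = ∑ x, (P x * (P x / Q x - 1)) := by
      rw [← sub_eq_zero, ← Finset.sum_sub_distrib]
      have : ∀ x ∈ Finset.univ, (P x - Q x)^2 / Q x - P x * (P x / Q x - 1)
          = Q x - P x := by
        intro x _
        have := (hQpos x).ne'
        field_simp
        ring
      rw [Finset.sum_congr rfl this, Finset.sum_sub_distrib, hP1, hQ1, sub_self]
    rw [key]
    apply Finset.sum_le_sum
    intro x _
    have hlog : Real.log (P x / Q x) ≤ P x / Q x - 1 :=
      Real.log_le_sub_one_of_pos (div_pos (hPpos x) (hQpos x))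
    exact mul_le_mul_of_nonneg_left hlog (hP0 x)
  have step2 : ∑ x, (P x - Q x)^2 / Q x ≤ (1/c) * ∑ x, (P x - Q x)^2 := by
    rw [Finset.mul_sum]
    apply Finset.sum_le_sum
    intro x _
    rw [one_div, inv_mul_eq_div]
    exact div_le_div_of_nonneg_left (sq_nonneg _) hc (hQc x)
  have step3 : ∑ x, (P x - Q x)^2 ≤ S^2 := by
    have : ∀ x ∈ Finset.univ, (P x - Q x)^2 ≤ |P x - Q x| * S := by
      intro x _
      rw [← sq_abs]
      have hx : |P x - Q x| ≤ S :=
        Finset.single_le_sum (f := fun y => |P y - Q y|)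
          (fun y _ => abs_nonneg _) (Finset.mem_univ x)
      calc |P x - Q x|^2 = |P x - Q x| * |P x - Q x| := _root_.sq _
        _ ≤ |P x - Q x| * S := mul_le_mul_of_nonneg_left hx (abs_nonneg _)
    calc ∑ x, (P x - Q x)^2 ≤ ∑ x, |P x - Q x| * S := Finset.sum_le_sum this
      _ = S * S := by rw [← Finset.sum_mul]
      _ = S^2 := (_root_.sq S).symm
  have hc2 : 0 ≤ 1 / (2 * c^2) := by positivity
  calc ∑ x, P x * Real.log (P x / Q x)
      ≤ (1/c) * ∑ x, (P x - Q x)^2 := step1.trans step2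
    _ ≤ (1/c) * S^2 := by
        apply mul_le_mul_of_nonneg_left step3 (by positivity)
    _ ≤ (1/(2*c^2) + 1/c) * S^2 := by nlinarith [sq_nonneg S]


end TopicModel
end
end

section
/- (Proposition: span membership forced by the coefficient identities in the K = 2 first-order analysis.) Let V ≥ 1, let θ_1, θ_2 ∈ ℝ^V and β, γ ∈ ℝ, set θ̄ = θ_1 + θ_2, u_1 = βθ̄ + γθ_1, u_2 = βθ̄ + γθ_2, and μ_{jℓ} = βθ̄(ℓ) + γθ_j(ℓ) for j ∈ {1,2} and ℓ ∈ [V] = {1,…,V}. Assume u_1 and u_2 are linearly independent in ℝ^V. If δ_1, δ_2 ∈ ℝ^V satisfy, for every ℓ ∈ [V], δ_1(ℓ)·u_1 + δ_2(ℓ)·u_2 + μ_{1ℓ}·δ_1 + μ_{2ℓ}·δ_2 = 0 (an identity of vectors in ℝ^V), then there exist real numbers ξ_{11}, ξ_{12}, ξ_{21}, ξ_{22} such that δ_1 = ξ_{11}u_1 + ξ_{12}u_2 and δ_2 = ξ_{21}u_1 + ξ_{22}u_2; that is, δ_1 and δ_2 belong to the linear span of {u_1, u_2}. -/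
open MeasureTheory Filter

noncomputable section

namespace TopicModel

/-- **Proposition (span membership forced by the coefficient identities, `K = 2` case).**
With `θ̄ = θ₁ + θ₂`, `u₁ = βθ̄ + γθ₁`, `u₂ = βθ̄ + γθ₂` linearly independent and
`μ_{jℓ} = βθ̄(ℓ) + γθ_j(ℓ)`, if `δ₁, δ₂` satisfy
`δ₁(ℓ)·u₁ + δ₂(ℓ)·u₂ + μ_{1ℓ}·δ₁ + μ_{2ℓ}·δ₂ = 0` for every `ℓ`, then `δ₁` and `δ₂`
lie in the span of `{u₁, u₂}`. -/
theorem span_membership_from_identities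
    {V : ℕ} (hV : 1 ≤ V) (θ1 θ2 : Fin V → ℝ) (β γ : ℝ)
    (u1 u2 : Fin V → ℝ)
    (hu1 : u1 = β • (θ1 + θ2) + γ • θ1)
    (hu2 : u2 = β • (θ1 + θ2) + γ • θ2)
    (hli : LinearIndependent ℝ ![u1, u2])
    (δ1 δ2 : Fin V → ℝ)
    (hid : ∀ ℓ : Fin V,
      δ1 ℓ • u1 + δ2 ℓ • u2
        + (β * (θ1 ℓ + θ2 ℓ) + γ * θ1 ℓ) • δ1
        + (β * (θ1 ℓ + θ2 ℓ) + γ * θ2 ℓ) • δ2 = 0) :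
    ∃ ξ11 ξ12 ξ21 ξ22 : ℝ,
      δ1 = ξ11 • u1 + ξ12 • u2 ∧ δ2 = ξ21 • u1 + ξ22 • u2 := by
  classical
  have hcoord1 : ∀ ℓ, u1 ℓ = β * (θ1 ℓ + θ2 ℓ) + γ * θ1 ℓ := by
    intro ℓ; rw [hu1]; simp [Pi.add_apply, Pi.smul_apply]; ring
  have hcoord2 : ∀ ℓ, u2 ℓ = β * (θ1 ℓ + θ2 ℓ) + γ * θ2 ℓ := by
    intro ℓ; rw [hu2]; simp [Pi.add_apply, Pi.smul_apply]; ring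
  set S := Submodule.span ℝ ({u1, u2} : Set (Fin V → ℝ)) with hS
  have hu1S : u1 ∈ S := Submodule.subset_span (by simp)
  have hu2S : u2 ∈ S := Submodule.subset_span (by simp)
  have hw : ∀ ℓ, u1 ℓ • δ1 + u2 ℓ • δ2 ∈ S := by
    intro ℓ
    have h := hid ℓ
    rw [← hcoord1 ℓ, ← hcoord2 ℓ] at h
    have heq : u1 ℓ • δ1 + u2 ℓ • δ2 = -(δ1 ℓ • u1 + δ2 ℓ • u2) := by
      have := h
      abel_nf at this ⊢
      linear_combination (norm := abel_nf) this
    rw [heq]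
    exact Submodule.neg_mem _ (Submodule.add_mem _
      (Submodule.smul_mem _ _ hu1S) (Submodule.smul_mem _ _ hu2S))
  have hpair := LinearIndependent.pair_iff.mp hli
  -- find a nonzero 2x2 minor
  have hminor : ∃ a b : Fin V, u1 a * u2 b - u1 b * u2 a ≠ 0 := by
    by_contra hcon
    push_neg at hcon
    have hzero : ∀ ℓ : Fin V, u1 ℓ = 0 ∧ u2 ℓ = 0 := by
      intro ℓ0
      have hv : (u2 ℓ0) • u1 + (-(u1 ℓ0)) • u2 = 0 := by
        funext ℓ
        have := hcon ℓ ℓ0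
        simp [Pi.add_apply, Pi.smul_apply]; ring
        linarith [hcon ℓ0 ℓ]
      have := hpair _ _ hv
      exact ⟨by linarith [this.2], this.1⟩
    have hv : (1:ℝ) • u1 + (0:ℝ) • u2 = 0 := by
      funext ℓ; simp [(hzero ℓ).1]
    exact one_ne_zero (hpair _ _ hv).1
  obtain ⟨a, b, hd⟩ := hminor
  set d := u1 a * u2 b - u1 b * u2 a with hdef
  have hδ1 : δ1 ∈ S := by
    have h1 : u2 b • (u1 a • δ1 + u2 a • δ2) - u2 a • (u1 b • δ1 + u2 b • δ2)
        = d • δ1 := by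
      funext ℓ
      simp only [Pi.sub_apply, Pi.smul_apply, Pi.add_apply, smul_eq_mul, hdef]
      ring
    have hmem : d • δ1 ∈ S := by
      rw [← h1]
      exact Submodule.sub_mem _ (Submodule.smul_mem _ _ (hw a))
        (Submodule.smul_mem _ _ (hw b))
    have : δ1 = d⁻¹ • (d • δ1) := by
      rw [smul_smul, inv_mul_cancel₀ hd, one_smul]
    rw [this]
    exact Submodule.smul_mem _ _ hmem
  have hδ2 : δ2 ∈ S := by
    have h1 : u1 a • (u1 b • δ1 + u2 b • δ2) - u1 b • (u1 a • δ1 + u2 a • δ2)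
        = d • δ2 := by
      funext ℓ
      simp only [Pi.sub_apply, Pi.smul_apply, Pi.add_apply, smul_eq_mul, hdef]
      ring
    have hmem : d • δ2 ∈ S := by
      rw [← h1]
      exact Submodule.sub_mem _ (Submodule.smul_mem _ _ (hw b))
        (Submodule.smul_mem _ _ (hw a))
    have : δ2 = d⁻¹ • (d • δ2) := by
      rw [smul_smul, inv_mul_cancel₀ hd, one_smul]
    rw [this]
    exact Submodule.smul_mem _ _ hmem
  obtain ⟨x1, y1, h1⟩ := Submodule.mem_span_pair.mp hδ1
  obtain ⟨x2, y2, h2⟩ := Submodule.mem_span_pair.mp hδ2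
  exact ⟨x1, y1, x2, y2, h1.symm, h2.symm⟩


end TopicModel
end
end

section
/- (Proposition: consistency of the smallest singular value of the first-order coefficient matrix under plug-in estimates.) Fix m ≥ 1, c_0 > 0 and θ ∈ Θ_{c_0}. Let (θ̂_n)_{n≥1} be a sequence of random parameters (each θ̂_n = (θ̂_{n,1},…,θ̂_{n,K}) with probability-vector components, defined on some probability space) such that d_W(θ, θ̂_n) → 0 in probability. Then σ_min(A(θ̂_n)) → σ_min(A(θ)) in probability, where σ_min denotes the smallest singular value. -/
open MeasureTheory Filter

noncomputable section

namespace TopicModel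

/-- The coefficient `ξ(i,j;θ,x) = ∫ h_j Π_{i'≠i} p_{θ,h}(x_{i'}) dν₀(h)`. -/
def xi1 {V K m : ℕ} (ν0 : Measure (Fin K → ℝ)) (θ : Fin K → Fin V → ℝ)
    (i : Fin m) (j : Fin K) (x : Fin m → Fin V) : ℝ :=
  ∫ h, h j * ∏ i' ∈ ({i} : Finset (Fin m))ᶜ, pWord θ h (x i') ∂ν0

/-- The `(V^m + K) × (VK)` coefficient matrix `A(θ)` of the first-order linear system:
rows indexed by documents `x ∈ [V]^m` (entry in column `(j,k)` equal to
`Σ_{i : x_i = k} ξ(i,j;θ,x)`) and by `j' ∈ [K]` (encoding `Σ_k δ_{j'k} = 0`). -/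
def coefMatrix {V K : ℕ} (ν0 : Measure (Fin K → ℝ)) (m : ℕ) (θ : Fin K → Fin V → ℝ) :
    Matrix ((Fin m → Fin V) ⊕ Fin K) (Fin K × Fin V) ℝ :=
  fun r c =>
    match r with
    | Sum.inl x => ∑ i ∈ Finset.univ.filter (fun i => x i = c.2), xi1 ν0 θ i c.1 x
    | Sum.inr j => if j = c.1 then 1 else 0

/-- The smallest singular value of a real matrix: the infimum of `‖Av‖₂` over unit vectors. -/
def sigmaMin {R C : Type*} [Fintype R] [Fintype C] (A : Matrix R C ℝ) : ℝ :=
  sInf {s : ℝ | ∃ v : C → ℝ, ∑ c, v c ^ 2 = 1 ∧ s = Real.sqrt (∑ r, A.mulVec v r ^ 2)}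

/-!
`σ_min` is Lipschitz in the matrix entries: by Cauchy–Schwarz, `|σ_min A - σ_min B|` is at
most `√(#rows · #cols)` times the largest entry of `|A - B|`. On probability parameters every
factor of the integrand of `ξ` lies in `[0, 1]`, so each entry of `A(θ)` is Lipschitz in `θ`
for the `ℓ¹` distance. Exchangeability of `ν₀` turns a relabelling of the topics into a
permutation of the rows and columns of `A(θ)`, which leaves `σ_min` unchanged.
Hence `|σ_min A(θ̂) - σ_min A(θ)| ≤ L · d_W(θ, θ̂)`, and convergence in probability transfers.
-/

open Finset Matrix

section MatrixLemmas

variable {R C : Type*} [Fintype R] [Fintype C]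

lemma sqrt_sum_sq_add_le (f g : R → ℝ) :
    √(∑ r, (f r + g r) ^ 2) ≤ √(∑ r, f r ^ 2) + √(∑ r, g r ^ 2) := by
  simpa [EuclideanSpace.norm_eq] using norm_add_le (WithLp.toLp 2 f) (WithLp.toLp 2 g)

lemma sqrt_sum_sq_mulVec_le {A : Matrix R C ℝ} {e : ℝ} (he : 0 ≤ e)
    (hA : ∀ r c, |A r c| ≤ e) {v : C → ℝ} (hv : ∑ c, v c ^ 2 = 1) :
    √(∑ r, (A *ᵥ v) r ^ 2) ≤ √(Fintype.card R * Fintype.card C) * e := by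
  have hrow : ∀ r, (A *ᵥ v) r ^ 2 ≤ Fintype.card C * e ^ 2 := fun r =>
    calc (A *ᵥ v) r ^ 2 ≤ (∑ c, A r c ^ 2) * ∑ c, v c ^ 2 := sum_mul_sq_le_sq_mul_sq _ _ _
      _ ≤ ∑ _c : C, e ^ 2 := by
          rw [hv, mul_one]
          exact sum_le_sum fun c _ => sq_le_sq' (abs_le.1 (hA r c)).1 (abs_le.1 (hA r c)).2
      _ = Fintype.card C * e ^ 2 := by simp
  calc √(∑ r, (A *ᵥ v) r ^ 2) ≤ √(∑ _r : R, Fintype.card C * e ^ 2) :=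
        Real.sqrt_le_sqrt (sum_le_sum fun r _ => hrow r)
    _ = √(Fintype.card R * Fintype.card C) * e := by
        rw [sum_const, card_univ, nsmul_eq_mul, ← mul_assoc, Real.sqrt_mul (by positivity),
          Real.sqrt_sq he]

lemma sigmaMin_le_add {A B : Matrix R C ℝ} {L : ℝ} (hL : 0 ≤ L)
    (h : ∀ v : C → ℝ, ∑ c, v c ^ 2 = 1 →
      √(∑ r, (A *ᵥ v) r ^ 2) ≤ √(∑ r, (B *ᵥ v) r ^ 2) + L) :
    sigmaMin A ≤ sigmaMin B + L := by
  rcases isEmpty_or_nonempty {v : C → ℝ // ∑ c, v c ^ 2 = 1} with hU | ⟨v₀, hv₀⟩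
  · -- without unit vectors (`C` empty) both infima are `sInf ∅ = 0`
    have hempty : ∀ M : Matrix R C ℝ, sigmaMin M = 0 := fun M => by
      rw [sigmaMin, ← Real.sInf_empty]
      congr 1
      exact Set.eq_empty_of_forall_notMem fun _ ⟨v, hv, _⟩ => hU.false ⟨v, hv⟩
    simpa [hempty] using hL
  rw [← sub_le_iff_le_add]
  refine le_csInf ⟨_, v₀, hv₀, rfl⟩ ?_
  rintro _ ⟨v, hv, rfl⟩
  have hA : sigmaMin A ≤ √(∑ r, (A *ᵥ v) r ^ 2) :=
    csInf_le ⟨0, fun _ ⟨_, _, hs⟩ => hs ▸ Real.sqrt_nonneg _⟩ ⟨v, hv, rfl⟩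
  linarith [h v hv]

lemma abs_sigmaMin_sub_le {A B : Matrix R C ℝ} {e : ℝ} (he : 0 ≤ e)
    (hAB : ∀ r c, |A r c - B r c| ≤ e) :
    |sigmaMin A - sigmaMin B| ≤ √(Fintype.card R * Fintype.card C) * e := by
  have hle : ∀ M N : Matrix R C ℝ, (∀ r c, |M r c - N r c| ≤ e) →
      sigmaMin M ≤ sigmaMin N + √(Fintype.card R * Fintype.card C) * e := by
    intro M N hMN
    refine sigmaMin_le_add (by positivity) fun v hv => ?_
    have hsplit : M *ᵥ v = N *ᵥ v + (M - N) *ᵥ v := by rw [Matrix.sub_mulVec]; abel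
    calc √(∑ r, (M *ᵥ v) r ^ 2)
        ≤ √(∑ r, (N *ᵥ v) r ^ 2) + √(∑ r, ((M - N) *ᵥ v) r ^ 2) := by
          rw [hsplit]; exact sqrt_sum_sq_add_le _ _
      _ ≤ _ := add_le_add_right (sqrt_sum_sq_mulVec_le he hMN hv) _
  rw [abs_sub_le_iff]
  constructor
  · linarith [hle A B hAB]
  · linarith [hle B A fun r c => abs_sub_comm (A r c) (B r c) ▸ hAB r c]

lemma sigmaMin_submatrix_equiv {R' C' : Type*} [Fintype R'] [Fintype C'] (A : Matrix R C ℝ)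
    (e₁ : R' ≃ R) (e₂ : C' ≃ C) : sigmaMin (A.submatrix e₁ e₂) = sigmaMin A := by
  have hnorm : ∀ v : C' → ℝ,
      ∑ r, (A.submatrix e₁ e₂ *ᵥ v) r ^ 2 = ∑ r, (A *ᵥ (v ∘ e₂.symm)) r ^ 2 := fun v => by
    rw [Matrix.submatrix_mulVec_equiv]
    exact e₁.sum_comp fun r => (A *ᵥ (v ∘ e₂.symm)) r ^ 2
  unfold sigmaMin
  congr 1
  ext s
  constructor
  · rintro ⟨v, hv, rfl⟩
    exact ⟨v ∘ e₂.symm, by rw [← hv]; exact e₂.symm.sum_comp fun c => v c ^ 2, by rw [hnorm]⟩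
  · rintro ⟨w, hw, rfl⟩
    refine ⟨w ∘ e₂, by rw [← hw]; exact e₂.sum_comp fun c => w c ^ 2, ?_⟩
    rw [hnorm]
    simp [Function.comp_def]

end MatrixLemmas

lemma abs_prod_sub_prod_le {ι : Type*} (s : Finset ι) {a b : ι → ℝ}
    (ha : ∀ i ∈ s, |a i| ≤ 1) (hb : ∀ i ∈ s, |b i| ≤ 1) :
    |∏ i ∈ s, a i - ∏ i ∈ s, b i| ≤ ∑ i ∈ s, |a i - b i| := by
  classical
  induction s using Finset.induction_on with
  | empty => simp
  | insert x s hx ih =>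
    simp only [forall_mem_insert] at ha hb
    rw [prod_insert hx, prod_insert hx, sum_insert hx]
    have hprod : |∏ i ∈ s, a i| ≤ 1 := by
      rw [abs_prod]; exact prod_le_one (fun _ _ => abs_nonneg _) ha.2
    calc |a x * ∏ i ∈ s, a i - b x * ∏ i ∈ s, b i|
        = |(a x - b x) * ∏ i ∈ s, a i + b x * (∏ i ∈ s, a i - ∏ i ∈ s, b i)| := by ring_nf
      _ ≤ |a x - b x| * |∏ i ∈ s, a i| + |b x| * |∏ i ∈ s, a i - ∏ i ∈ s, b i| := by
          simpa only [abs_mul] using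
            abs_add_le ((a x - b x) * ∏ i ∈ s, a i) (b x * (∏ i ∈ s, a i - ∏ i ∈ s, b i))
      _ ≤ |a x - b x| * 1 + 1 * ∑ i ∈ s, |a i - b i| := by
          gcongr
          · exact hb.1
          · exact ih ha.2 hb.2
      _ = _ := by ring

section TopicModelLemmas

variable {V K m : ℕ}

lemma abs_le_one_of_mem_simplex {h : Fin K → ℝ} (hh : h ∈ simplex K) (k : Fin K) :
    |h k| ≤ 1 := by
  rw [abs_of_nonneg (hh.1 k), ← hh.2]
  exact single_le_sum (f := h) (fun i _ => hh.1 i) (mem_univ k)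

lemma IsParam.abs_le_one {θ : Fin K → Fin V → ℝ} (hθ : IsParam θ) (k : Fin K) (ℓ : Fin V) :
    |θ k ℓ| ≤ 1 := by
  rw [abs_of_nonneg (hθ.1 k ℓ), ← hθ.2 k]
  exact single_le_sum (f := θ k) (fun i _ => hθ.1 k i) (mem_univ ℓ)

lemma abs_pWord_le_of_le {δ : Fin K → Fin V → ℝ} {h : Fin K → ℝ} (hh : h ∈ simplex K)
    (v : Fin V) {b : ℝ} (hδ : ∀ k, |δ k v| ≤ b) : |pWord δ h v| ≤ b := by
  calc |pWord δ h v| ≤ ∑ k, h k * |δ k v| := by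
        simpa only [pWord, abs_mul, abs_of_nonneg (hh.1 _)] using
          abs_sum_le_sum_abs (fun k => h k * δ k v) univ
    _ ≤ ∑ k, h k * b := sum_le_sum fun k _ => mul_le_mul_of_nonneg_left (hδ k) (hh.1 k)
    _ = b := by rw [← sum_mul, hh.2, one_mul]

lemma pWord_sub (θ₁ θ₂ : Fin K → Fin V → ℝ) (h : Fin K → ℝ) (v : Fin V) :
    pWord θ₁ h v - pWord θ₂ h v = pWord (θ₁ - θ₂) h v := by
  simp only [pWord, Pi.sub_apply, mul_sub, sum_sub_distrib]

lemma abs_pWord_sub_le {θ₁ θ₂ : Fin K → Fin V → ℝ} {h : Fin K → ℝ} (hh : h ∈ simplex K)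
    (v : Fin V) : |pWord θ₁ h v - pWord θ₂ h v| ≤ norm1 (θ₁ - θ₂) := by
  rw [pWord_sub]
  refine abs_pWord_le_of_le hh v fun k => ?_
  calc |(θ₁ - θ₂) k v| ≤ ∑ ℓ, |(θ₁ - θ₂) k ℓ| :=
        single_le_sum (f := fun ℓ => |(θ₁ - θ₂) k ℓ|) (fun _ _ => abs_nonneg _) (mem_univ v)
    _ ≤ norm1 (θ₁ - θ₂) :=
        single_le_sum (f := fun k => ∑ ℓ, |(θ₁ - θ₂) k ℓ|)
          (fun _ _ => sum_nonneg fun _ _ => abs_nonneg _) (mem_univ k)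

lemma norm1_nonneg (δ : Fin K → Fin V → ℝ) : 0 ≤ norm1 δ :=
  sum_nonneg fun _ _ => sum_nonneg fun _ _ => abs_nonneg _

lemma natCast_card_le_of_fin (s : Finset (Fin m)) : (#s : ℝ) ≤ m := by
  exact_mod_cast (card_le_univ s).trans_eq (Fintype.card_fin m)

lemma abs_prod_pWord_sub_le {θ₁ θ₂ : Fin K → Fin V → ℝ} (h₁ : IsParam θ₁) (h₂ : IsParam θ₂)
    {h : Fin K → ℝ} (hh : h ∈ simplex K) (s : Finset (Fin m)) (x : Fin m → Fin V) :
    |∏ i ∈ s, pWord θ₁ h (x i) - ∏ i ∈ s, pWord θ₂ h (x i)| ≤ m * norm1 (θ₁ - θ₂) :=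
  calc _ ≤ ∑ i ∈ s, |pWord θ₁ h (x i) - pWord θ₂ h (x i)| :=
        abs_prod_sub_prod_le s (fun i _ => abs_pWord_le_of_le hh _ fun k => h₁.abs_le_one k _)
          (fun i _ => abs_pWord_le_of_le hh _ fun k => h₂.abs_le_one k _)
    _ ≤ #s * norm1 (θ₁ - θ₂) := by
        simpa only [nsmul_eq_mul] using
          sum_le_card_nsmul s _ _ fun i _ => abs_pWord_sub_le hh (x i)
    _ ≤ m * norm1 (θ₁ - θ₂) :=
        mul_le_mul_of_nonneg_right (natCast_card_le_of_fin s) (norm1_nonneg _)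

variable {ν0 : Measure (Fin K → ℝ)}

lemma abs_xi1_sub_le [IsProbabilityMeasure ν0] (hsupp : ν0 (simplex K)ᶜ = 0)
    {θ₁ θ₂ : Fin K → Fin V → ℝ} (h₁ : IsParam θ₁) (h₂ : IsParam θ₂)
    (i : Fin m) (j : Fin K) (x : Fin m → Fin V) :
    |xi1 ν0 θ₁ i j x - xi1 ν0 θ₂ i j x| ≤ m * norm1 (θ₁ - θ₂) := by
  set F : (Fin K → Fin V → ℝ) → (Fin K → ℝ) → ℝ :=
    fun θ h => h j * ∏ i' ∈ ({i} : Finset (Fin m))ᶜ, pWord θ h (x i')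
  have hsimplex : ∀ᵐ h ∂ν0, h ∈ simplex K := ae_iff.2 hsupp
  have hint : ∀ θ, IsParam θ → Integrable (F θ) ν0 := fun θ hθ => by
    have hcont : Continuous (F θ) := by simp only [F, pWord]; fun_prop
    refine (integrable_const (1 : ℝ)).mono' hcont.aestronglyMeasurable ?_
    filter_upwards [hsimplex] with h hh
    rw [Real.norm_eq_abs, abs_mul, abs_prod]
    exact mul_le_one₀ (abs_le_one_of_mem_simplex hh j) (prod_nonneg fun _ _ => abs_nonneg _)
      (prod_le_one (fun _ _ => abs_nonneg _)
        fun _ _ => abs_pWord_le_of_le hh _ fun k => hθ.abs_le_one k _)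
  have hlip : ∀ᵐ h ∂ν0, ‖F θ₁ h - F θ₂ h‖ ≤ m * norm1 (θ₁ - θ₂) := by
    filter_upwards [hsimplex] with h hh
    rw [Real.norm_eq_abs, ← mul_sub, abs_mul, ← one_mul (_ * norm1 _)]
    exact mul_le_mul (abs_le_one_of_mem_simplex hh j) (abs_prod_pWord_sub_le h₁ h₂ hh _ x)
      (abs_nonneg _) zero_le_one
  calc |xi1 ν0 θ₁ i j x - xi1 ν0 θ₂ i j x| = ‖∫ h, F θ₁ h - F θ₂ h ∂ν0‖ := by
        rw [integral_sub (hint θ₁ h₁) (hint θ₂ h₂), Real.norm_eq_abs]; rfl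
    _ ≤ m * norm1 (θ₁ - θ₂) := by
        simpa using norm_integral_le_of_norm_le_const hlip

lemma abs_coefMatrix_sub_le [IsProbabilityMeasure ν0] (hsupp : ν0 (simplex K)ᶜ = 0)
    {θ₁ θ₂ : Fin K → Fin V → ℝ} (h₁ : IsParam θ₁) (h₂ : IsParam θ₂)
    (r : (Fin m → Fin V) ⊕ Fin K) (c : Fin K × Fin V) :
    |coefMatrix ν0 m θ₁ r c - coefMatrix ν0 m θ₂ r c| ≤ m * m * norm1 (θ₁ - θ₂) := by
  have hnorm := norm1_nonneg (θ₁ - θ₂)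
  rcases r with x | j
  · set s := univ.filter fun i => x i = c.2
    calc |∑ i ∈ s, xi1 ν0 θ₁ i c.1 x - ∑ i ∈ s, xi1 ν0 θ₂ i c.1 x|
        ≤ ∑ i ∈ s, |xi1 ν0 θ₁ i c.1 x - xi1 ν0 θ₂ i c.1 x| := by
          rw [← sum_sub_distrib]; exact abs_sum_le_sum_abs _ _
      _ ≤ #s * (m * norm1 (θ₁ - θ₂)) := by
          simpa only [nsmul_eq_mul] using
            sum_le_card_nsmul s _ _ fun i _ => abs_xi1_sub_le hsupp h₁ h₂ i c.1 x
      _ ≤ m * m * norm1 (θ₁ - θ₂) := by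
          rw [mul_assoc]
          exact mul_le_mul_of_nonneg_right (natCast_card_le_of_fin s) (by positivity)
  · simp only [coefMatrix, sub_self, abs_zero]
    positivity

lemma xi1_comp_perm (hexch : ∀ π : Equiv.Perm (Fin K), Measure.map (fun h => h ∘ π) ν0 = ν0)
    (θ : Fin K → Fin V → ℝ) (π : Equiv.Perm (Fin K)) (i : Fin m) (j : Fin K)
    (x : Fin m → Fin V) : xi1 ν0 (θ ∘ π) i j x = xi1 ν0 θ i (π j) x := by
  set F : (Fin K → ℝ) → ℝ := fun g => g (π j) * ∏ i' ∈ ({i} : Finset (Fin m))ᶜ, pWord θ g (x i')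
  have hF : Continuous F := by simp only [F, pWord]; fun_prop
  have hpWord : ∀ h v, pWord (θ ∘ π) h v = pWord θ (h ∘ π.symm) v := fun h v => by
    simp only [pWord, ← Equiv.sum_comp π fun k => (h ∘ π.symm) k * θ k v]
    simp
  calc xi1 ν0 (θ ∘ π) i j x = ∫ h, F (h ∘ π.symm) ∂ν0 := by
        simp only [xi1, F, hpWord, Function.comp_apply, Equiv.symm_apply_apply]
    _ = ∫ g, F g ∂(ν0.map fun h => h ∘ π.symm) :=
        (integral_map (measurable_pi_lambda _ fun k => measurable_pi_apply _).aemeasurable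
          hF.aestronglyMeasurable).symm
    _ = xi1 ν0 θ i (π j) x := by rw [hexch]; rfl

lemma coefMatrix_comp_perm
    (hexch : ∀ π : Equiv.Perm (Fin K), Measure.map (fun h => h ∘ π) ν0 = ν0)
    (θ : Fin K → Fin V → ℝ) (π : Equiv.Perm (Fin K)) :
    coefMatrix ν0 m (θ ∘ π) = (coefMatrix ν0 m θ).submatrix
      (Equiv.sumCongr (Equiv.refl _) π) (Equiv.prodCongr π (Equiv.refl _)) := by
  ext (x | j) c
  · simp [coefMatrix, xi1_comp_perm hexch]
  · simp [coefMatrix]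

lemma exists_perm_dW_eq (θ θ' : Fin K → Fin V → ℝ) :
    ∃ π : Equiv.Perm (Fin K), dW θ θ' = norm1 (θ - θ' ∘ π) := by
  obtain ⟨π, hπ⟩ := exists_eq_ciInf_of_finite (f := fun π : Equiv.Perm (Fin K) =>
    ∑ k, ∑ ℓ, |θ k ℓ - θ' (π k) ℓ|)
  exact ⟨π, hπ.symm⟩

theorem abs_sigmaMin_coefMatrix_sub_le [IsProbabilityMeasure ν0]
    (hsupp : ν0 (simplex K)ᶜ = 0)
    (hexch : ∀ π : Equiv.Perm (Fin K), Measure.map (fun h => h ∘ π) ν0 = ν0)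
    {θ θ' : Fin K → Fin V → ℝ} (hθ : IsParam θ) (hθ' : IsParam θ') :
    |sigmaMin (coefMatrix ν0 m θ') - sigmaMin (coefMatrix ν0 m θ)|
      ≤ √((V ^ m + K) * (K * V)) * (m * m) * dW θ θ' := by
  obtain ⟨π, hπ⟩ := exists_perm_dW_eq θ θ'
  have hθπ : IsParam (θ' ∘ π) := ⟨fun k => hθ'.1 (π k), fun k => hθ'.2 (π k)⟩
  have hnorm := norm1_nonneg (θ - θ' ∘ π)
  rw [← sigmaMin_submatrix_equiv _ (Equiv.sumCongr (Equiv.refl _) π)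
    (Equiv.prodCongr π (Equiv.refl _)), ← coefMatrix_comp_perm hexch, abs_sub_comm, hπ, mul_assoc]
  simpa using abs_sigmaMin_sub_le (by positivity) (abs_coefMatrix_sub_le hsupp hθ hθπ)

end TopicModelLemmas

lemma tendsto_measure_le_of_le_mul {Ω ι : Type*} [MeasurableSpace Ω] (μ : Measure Ω)
    {l : Filter ι} {X Y : ι → Ω → ℝ} {L : ℝ} (hL : 0 ≤ L) (hXY : ∀ n ω, X n ω ≤ L * Y n ω)
    (hY : ∀ ε > (0 : ℝ), Tendsto (fun n => μ {ω | ε ≤ Y n ω}) l (nhds 0)) :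
    ∀ ε > (0 : ℝ), Tendsto (fun n => μ {ω | ε ≤ X n ω}) l (nhds 0) := by
  intro ε hε
  refine tendsto_of_tendsto_of_tendsto_of_le_of_le tendsto_const_nhds
    (hY (ε / (L + 1)) (by positivity)) (fun _ => zero_le) fun n => measure_mono ?_
  intro ω (hω : ε ≤ X n ω)
  have hpos : 0 < Y n ω := pos_of_mul_pos_right (hε.trans_le (hω.trans (hXY n ω))) hL
  show ε / (L + 1) ≤ Y n ω
  rw [div_le_iff₀ (by positivity)]
  nlinarith [hXY n ω]

theorem sigmaMin_consistent_general
    {V K m : ℕ} {c0 : ℝ} (hc0 : 0 < c0)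
    (ν0 : Measure (Fin K → ℝ)) (hprob : IsProbabilityMeasure ν0)
    (hsupp : ν0 (simplex K)ᶜ = 0)
    (hexch : ∀ π : Equiv.Perm (Fin K), Measure.map (fun h => h ∘ π) ν0 = ν0)
    (θ : Fin K → Fin V → ℝ) (hθ : θ ∈ Theta c0 V K)
    {Ω : Type*} [MeasurableSpace Ω] (μ : Measure Ω)
    (θhat : ℕ → Ω → (Fin K → Fin V → ℝ))
    (hparam : ∀ n ω, IsParam (θhat n ω))
    (hconv : ∀ ε > (0 : ℝ),
      Tendsto (fun n => μ {ω | ε ≤ dW θ (θhat n ω)}) atTop (nhds 0)) :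
    ∀ ε > (0 : ℝ),
      Tendsto (fun n => μ {ω |
          ε ≤ |sigmaMin (coefMatrix ν0 m (θhat n ω))
                - sigmaMin (coefMatrix ν0 m θ)|})
        atTop (nhds 0) := by
  have hθ' : IsParam θ := ⟨fun k ℓ => hc0.le.trans (hθ.1 k ℓ), hθ.2⟩
  exact tendsto_measure_le_of_le_mul μ (by positivity)
    (fun n ω => abs_sigmaMin_coefMatrix_sub_le hsupp hexch hθ' (hparam n ω)) hconv

/-- **Proposition (consistency of the smallest singular value under plug-in estimates).**
If `d_W(θ, θ̂_n) → 0` in probability, then `σ_min(A(θ̂_n)) → σ_min(A(θ))` in probability. -/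
theorem sigmaMin_consistent
    {V K m : ℕ} (hV : 2 ≤ V) (hK : 2 ≤ K) (hm : 1 ≤ m) {c0 : ℝ} (hc0 : 0 < c0)
    (ν0 : Measure (Fin K → ℝ)) (hprob : IsProbabilityMeasure ν0)
    (hsupp : ν0 (simplex K)ᶜ = 0)
    (hexch : ∀ π : Equiv.Perm (Fin K), Measure.map (fun h => h ∘ π) ν0 = ν0)
    (θ : Fin K → Fin V → ℝ) (hθ : θ ∈ Theta c0 V K)
    {Ω : Type*} [MeasurableSpace Ω] (μ : Measure Ω) [IsProbabilityMeasure μ]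
    (θhat : ℕ → Ω → (Fin K → Fin V → ℝ))
    (hparam : ∀ n ω, IsParam (θhat n ω))
    (hconv : ∀ ε > (0 : ℝ),
      Tendsto (fun n => μ {ω | ε ≤ dW θ (θhat n ω)}) atTop (nhds 0)) :
    ∀ ε > (0 : ℝ),
      Tendsto (fun n => μ {ω |
          ε ≤ |sigmaMin (coefMatrix ν0 m (θhat n ω))
                - sigmaMin (coefMatrix ν0 m θ)|})
        atTop (nhds 0) :=
  sigmaMin_consistent_general hc0 ν0 hprob hsupp hexch θ hθ μ θhat hparam hconv

end TopicModel
end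
end

section
/- (Moment identities for two topics with two words per document, and finiteness of the equivalence class.) Let K = 2, m = 2 and c_0 > 0. If θ = (θ_1,θ_2) ∈ Θ_{c_0} and θ′ = (θ′_1,θ′_2) ∈ Θ_{c_0} satisfy p_{θ,2}(x) = p_{θ′,2}(x) for all x ∈ [V]², then for every ℓ ∈ [V]: θ_1(ℓ) + θ_2(ℓ) = θ′_1(ℓ) + θ′_2(ℓ) and θ_1(ℓ)·θ_2(ℓ) = θ′_1(ℓ)·θ′_2(ℓ). Consequently, the set {θ′ ∈ Θ_{c_0} : p_{θ′,2}(x) = p_{θ,2}(x) for all x ∈ [V]²} has cardinality at most 2^V. -/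
open MeasureTheory Filter

noncomputable section

namespace TopicModel

/-!
Let `a = E[h₁²]` and `b = E[h₁h₂]`. Exchangeability makes the second-moment matrix of `ν₀`
equal to `[[a, b], [b, a]]`, and first moments equal `1/2`. Summing `p_{θ,2}(ℓ, ·)` over the
second word gives `(θ₁(ℓ) + θ₂(ℓ)) / 2`, while
`p_{θ,2}(ℓ, ℓ) = a (θ₁(ℓ) + θ₂(ℓ))² - 2 (a - b) θ₁(ℓ) θ₂(ℓ)`; as `a > b`, the pmf determines
the sum and the product of `θ₁(ℓ), θ₂(ℓ)`, hence this pair up to order, for each of the `V` words.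
-/

lemma NiceMixing.ae_mem_simplex {K : ℕ} {ν : Measure (Fin K → ℝ)} (hν : NiceMixing K ν) :
    ∀ᵐ h ∂ν, h ∈ simplex K :=
  ae_iff.2 hν.support

lemma apply_le_one_of_mem_simplex {K : ℕ} {h : Fin K → ℝ} (hh : h ∈ simplex K) (i : Fin K) :
    h i ≤ 1 :=
  hh.2 ▸ Finset.single_le_sum (fun k _ => hh.1 k) (Finset.mem_univ i)

section Moments

variable {K V : ℕ} {ν : Measure (Fin K → ℝ)} [IsFiniteMeasure ν]

lemma integrable_apply (hν : ∀ᵐ h ∂ν, h ∈ simplex K) (i : Fin K) :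
    Integrable (fun h => h i) ν := by
  refine Integrable.mono' (integrable_const 1) (measurable_pi_apply i).aestronglyMeasurable ?_
  filter_upwards [hν] with h hh
  rw [Real.norm_eq_abs, abs_of_nonneg (hh.1 i)]
  exact apply_le_one_of_mem_simplex hh i

lemma integrable_apply_mul_apply (hν : ∀ᵐ h ∂ν, h ∈ simplex K) (i j : Fin K) :
    Integrable (fun h => h i * h j) ν := by
  refine Integrable.mono' (integrable_const 1)
    ((measurable_pi_apply i).mul (measurable_pi_apply j)).aestronglyMeasurable ?_
  filter_upwards [hν] with h hh
  rw [Real.norm_eq_abs, abs_of_nonneg (mul_nonneg (hh.1 i) (hh.1 j))]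
  exact mul_le_one₀ (apply_le_one_of_mem_simplex hh i) (hh.1 j) (apply_le_one_of_mem_simplex hh j)

lemma sum_integral_apply_mul_apply (hν : ∀ᵐ h ∂ν, h ∈ simplex K) (i : Fin K) :
    ∑ j, ∫ h, h i * h j ∂ν = ∫ h, h i ∂ν := by
  rw [← integral_finsetSum _ fun j _ => integrable_apply_mul_apply hν i j]
  refine integral_congr_ae ?_
  filter_upwards [hν] with h hh
  rw [← Finset.mul_sum, hh.2, mul_one]

lemma pM_two_eq (hν : ∀ᵐ h ∂ν, h ∈ simplex K) (θ : Fin K → Fin V → ℝ) (x : Fin 2 → Fin V) :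
    pM ν 2 θ x = ∑ i, ∑ j, (∫ h, h i * h j ∂ν) * (θ i (x 0) * θ j (x 1)) := by
  have hint : ∀ i j, Integrable (fun h => h i * h j * (θ i (x 0) * θ j (x 1))) ν :=
    fun i j => (integrable_apply_mul_apply hν i j).mul_const _
  calc pM ν 2 θ x = ∫ h, ∑ i, ∑ j, h i * h j * (θ i (x 0) * θ j (x 1)) ∂ν := by
        refine integral_congr_ae (ae_of_all _ fun h => ?_)
        simp only [pDoc, pWord, Fin.prod_univ_two, Finset.sum_mul_sum]
        exact Finset.sum_congr rfl fun i _ => Finset.sum_congr rfl fun j _ => by ring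
    _ = ∑ i, ∑ j, (∫ h, h i * h j ∂ν) * (θ i (x 0) * θ j (x 1)) := by
        rw [integral_finsetSum _ fun i _ => integrable_finsetSum _ fun j _ => hint i j]
        simp_rw [integral_finsetSum _ fun j _ => hint _ j, integral_mul_const]

lemma sum_integral_apply [IsProbabilityMeasure ν] (hν : ∀ᵐ h ∂ν, h ∈ simplex K) :
    ∑ i, ∫ h, h i ∂ν = 1 := by
  rw [← integral_finsetSum _ fun i _ => integrable_apply hν i]
  calc ∫ h, ∑ i, h i ∂ν = ∫ _, (1 : ℝ) ∂ν := integral_congr_ae (hν.mono fun h hh => hh.2)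
    _ = 1 := by simp

lemma sum_pM_two_cons (hν : ∀ᵐ h ∂ν, h ∈ simplex K) {θ : Fin K → Fin V → ℝ}
    (hθ : ∀ k, ∑ ℓ, θ k ℓ = 1) (u : Fin V) :
    ∑ v, pM ν 2 θ ![u, v] = ∑ i, (∫ h, h i ∂ν) * θ i u := by
  simp only [pM_two_eq hν, Matrix.cons_val_zero, Matrix.cons_val_one]
  rw [Finset.sum_comm]
  refine Finset.sum_congr rfl fun i _ => ?_
  rw [Finset.sum_comm, ← sum_integral_apply_mul_apply hν i, Finset.sum_mul]
  refine Finset.sum_congr rfl fun j _ => ?_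
  rw [← Finset.mul_sum, ← Finset.mul_sum, hθ j, mul_one]

end Moments

lemma integral_comp_perm {K : ℕ} {ν : Measure (Fin K → ℝ)} {π : Equiv.Perm (Fin K)}
    (hπ : ν.map (fun h => h ∘ π) = ν) {f : (Fin K → ℝ) → ℝ} (hf : Measurable f) :
    ∫ h, f (h ∘ π) ∂ν = ∫ h, f h ∂ν := by
  conv_rhs => rw [← hπ]
  exact (integral_map (measurable_pi_lambda _ fun k => measurable_pi_apply (π k)).aemeasurable
    hf.aestronglyMeasurable).symm

section TwoTopics

variable {V : ℕ} {ν : Measure (Fin 2 → ℝ)}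

lemma NiceMixing.integral_swap_apply_mul_apply (hν : NiceMixing 2 ν) (i j : Fin 2) :
    ∫ h, h (Equiv.swap 0 1 i) * h (Equiv.swap 0 1 j) ∂ν = ∫ h, h i * h j ∂ν :=
  integral_comp_perm (hν.exch _) ((measurable_pi_apply i).mul (measurable_pi_apply j))

lemma NiceMixing.integral_apply_eq_half (hν : NiceMixing 2 ν) (i : Fin 2) :
    ∫ h, h i ∂ν = 1 / 2 := by
  have := hν.prob
  have hswap : ∫ h, h 1 ∂ν = ∫ h, h 0 ∂ν := by
    simpa using integral_comp_perm (hν.exch (Equiv.swap 0 1)) (measurable_pi_apply 0)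
  have hsum := sum_integral_apply hν.ae_mem_simplex
  rw [Fin.sum_univ_two] at hsum
  match i with
  | 0 => linarith
  | 1 => linarith

lemma NiceMixing.pM_two_cons_self (hν : NiceMixing 2 ν) (θ : Fin 2 → Fin V → ℝ) (u : Fin V) :
    pM ν 2 θ ![u, u] = (∫ h, h 0 ^ 2 ∂ν) * (θ 0 u + θ 1 u) ^ 2
      - 2 * ((∫ h, h 0 ^ 2 ∂ν) - ∫ h, h 0 * h 1 ∂ν) * (θ 0 u * θ 1 u) := by
  have := hν.prob
  have h11 : ∫ h, h 1 * h 1 ∂ν = ∫ h, h 0 * h 0 ∂ν := by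
    simpa using hν.integral_swap_apply_mul_apply 0 0
  have h10 : ∫ h, h 1 * h 0 ∂ν = ∫ h, h 0 * h 1 ∂ν := by
    simpa using hν.integral_swap_apply_mul_apply 0 1
  simp only [pM_two_eq hν.ae_mem_simplex, Fin.sum_univ_two, Matrix.cons_val_zero,
    Matrix.cons_val_one, h11, h10, sq]
  ring

lemma NiceMixing.add_eq_and_mul_eq_of_pM_eq (hν : NiceMixing 2 ν) {θ θ' : Fin 2 → Fin V → ℝ}
    (hθ : ∀ k, ∑ ℓ, θ k ℓ = 1) (hθ' : ∀ k, ∑ ℓ, θ' k ℓ = 1)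
    (heq : ∀ x, pM ν 2 θ x = pM ν 2 θ' x) :
    (∀ ℓ, θ 0 ℓ + θ 1 ℓ = θ' 0 ℓ + θ' 1 ℓ) ∧ ∀ ℓ, θ 0 ℓ * θ 1 ℓ = θ' 0 ℓ * θ' 1 ℓ := by
  have := hν.prob
  have hadd : ∀ ℓ, θ 0 ℓ + θ 1 ℓ = θ' 0 ℓ + θ' 1 ℓ := fun ℓ => by
    have hrow : ∑ v, pM ν 2 θ ![ℓ, v] = ∑ v, pM ν 2 θ' ![ℓ, v] :=
      Finset.sum_congr rfl fun v _ => heq ![ℓ, v]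
    simp only [sum_pM_two_cons hν.ae_mem_simplex hθ, sum_pM_two_cons hν.ae_mem_simplex hθ',
      hν.integral_apply_eq_half, Fin.sum_univ_two] at hrow
    linarith
  have hgap : (∫ h, h 0 ^ 2 ∂ν) - ∫ h, h 0 * h 1 ∂ν ≠ 0 :=
    sub_ne_zero.2 (hν.mom2 0 1 zero_ne_one).ne'
  refine ⟨hadd, fun ℓ => mul_left_cancel₀ hgap ?_⟩
  have hdiag := heq ![ℓ, ℓ]
  rw [hν.pM_two_cons_self, hν.pM_two_cons_self, hadd] at hdiag
  linarith

end TwoTopics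

def swapTopicsAt {V : ℕ} (θ : Fin 2 → Fin V → ℝ) (b : Fin V → Bool) : Fin 2 → Fin V → ℝ :=
  fun k ℓ => θ (if b ℓ then Equiv.swap 0 1 k else k) ℓ

lemma mem_range_swapTopicsAt {V : ℕ} {θ τ : Fin 2 → Fin V → ℝ}
    (hadd : ∀ ℓ, τ 0 ℓ + τ 1 ℓ = θ 0 ℓ + θ 1 ℓ) (hmul : ∀ ℓ, τ 0 ℓ * τ 1 ℓ = θ 0 ℓ * θ 1 ℓ) :
    τ ∈ Set.range (swapTopicsAt θ) := by
  classical
  refine ⟨fun ℓ => decide (τ 0 ℓ ≠ θ 0 ℓ), funext fun k => funext fun ℓ => ?_⟩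
  by_cases hℓ : τ 0 ℓ = θ 0 ℓ
  · have h1 : τ 1 ℓ = θ 1 ℓ := by linarith [hadd ℓ]
    fin_cases k <;> simp [swapTopicsAt, hℓ, h1]
  · have hroot : (τ 0 ℓ - θ 0 ℓ) * (τ 0 ℓ - θ 1 ℓ) = 0 := by
      linear_combination τ 0 ℓ * hadd ℓ - hmul ℓ
    have h0 : τ 0 ℓ = θ 1 ℓ :=
      sub_eq_zero.1 ((mul_eq_zero.1 hroot).resolve_left (sub_ne_zero.2 hℓ))
    have h1 : τ 1 ℓ = θ 0 ℓ := by linarith [hadd ℓ]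
    rw [h0] at hℓ
    fin_cases k <;> simp [swapTopicsAt, hℓ, h0, h1]

theorem two_topic_moment_identities_general
    {V : ℕ} {c0 : ℝ}
    (ν0 : Measure (Fin 2 → ℝ)) (hν0 : NiceMixing 2 ν0)
    (θ θ' : Fin 2 → Fin V → ℝ) (hθ : θ ∈ Theta c0 V 2) (hθ' : θ' ∈ Theta c0 V 2)
    (heq : ∀ x : Fin 2 → Fin V, pM ν0 2 θ x = pM ν0 2 θ' x) :
    (∀ ℓ : Fin V, θ 0 ℓ + θ 1 ℓ = θ' 0 ℓ + θ' 1 ℓ) ∧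
    (∀ ℓ : Fin V, θ 0 ℓ * θ 1 ℓ = θ' 0 ℓ * θ' 1 ℓ) ∧
    (equivClass ν0 2 c0 θ).Finite ∧ Nat.card (equivClass ν0 2 c0 θ) ≤ 2 ^ V := by
  have hclass : equivClass ν0 2 c0 θ ⊆ Set.range (swapTopicsAt θ) := fun τ hτ =>
    (hν0.add_eq_and_mul_eq_of_pM_eq hτ.1.2 hθ.2 hτ.2).elim mem_range_swapTopicsAt
  obtain ⟨hadd, hmul⟩ := hν0.add_eq_and_mul_eq_of_pM_eq hθ.2 hθ'.2 heq
  refine ⟨hadd, hmul, (Set.finite_range _).subset hclass, ?_⟩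
  calc Nat.card (equivClass ν0 2 c0 θ) ≤ Nat.card (Set.range (swapTopicsAt θ)) :=
        Nat.card_mono (Set.finite_range _) hclass
    _ ≤ Nat.card (Fin V → Bool) := Finite.card_range_le _
    _ = 2 ^ V := by simp

/-- **Moment identities for two topics with two words per document, and finiteness of the
equivalence class.** If `θ, θ' ∈ Θ_{c₀}` (with `K = 2`, `m = 2`) induce the same document
pmf, then coordinatewise `θ₁ + θ₂ = θ'₁ + θ'₂` and `θ₁·θ₂ = θ'₁·θ'₂`; consequently the
equivalence class of `θ` has cardinality at most `2^V`. -/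
theorem two_topic_moment_identities
    {V : ℕ} (hV : 2 ≤ V) {c0 : ℝ} (hc0 : 0 < c0)
    (ν0 : Measure (Fin 2 → ℝ)) (hν0 : NiceMixing 2 ν0)
    (θ θ' : Fin 2 → Fin V → ℝ) (hθ : θ ∈ Theta c0 V 2) (hθ' : θ' ∈ Theta c0 V 2)
    (heq : ∀ x : Fin 2 → Fin V, pM ν0 2 θ x = pM ν0 2 θ' x) :
    (∀ ℓ : Fin V, θ 0 ℓ + θ 1 ℓ = θ' 0 ℓ + θ' 1 ℓ) ∧
    (∀ ℓ : Fin V, θ 0 ℓ * θ 1 ℓ = θ' 0 ℓ * θ' 1 ℓ) ∧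
    (equivClass ν0 2 c0 θ).Finite ∧ Nat.card (equivClass ν0 2 c0 θ) ≤ 2 ^ V :=
  two_topic_moment_identities_general ν0 hν0 θ θ' hθ hθ' heq

end TopicModel
end
end
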